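/- For every e ≥ 1 and every c > 0, the form c·(x_1^2 + ... + x_n^2)^e lies in the interior of the sums-of-squares cone Σ_{2e}. -/

import Mathlib

open MvPolynomial Finsupp

/-- `f` is a sum of squares of forms of degree `d` in `n` variables. -/
def IsSOSForm (n d : ℕ) (f : MvPolynomial (Fin n) ℝ) : Prop :=
  ∃ (N : ℕ) (g : Fin N → MvPolynomial (Fin n) ℝ),
    (∀ i, (g i).IsHomogeneous d) ∧ f = ∑ i, (g i) ^ 2

/-- The cone `Σ_{2d}` of sums of squares of degree-`d` forms, as a subset of the
finite-dimensional real vector space `R[x]_{2d}` of forms of degree `2d`. -/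
def SigmaCone (n d : ℕ) : Set (homogeneousSubmodule (Fin n) ℝ (2 * d)) :=
  {f | IsSOSForm n d (f : MvPolynomial (Fin n) ℝ)}

/-- The canonical topology on the finite-dimensional real vector space of forms. -/
noncomputable instance (n d : ℕ) : TopologicalSpace (homogeneousSubmodule (Fin n) ℝ d) :=
  moduleTopology ℝ _

/-- A form is positive definite if it is positive away from the origin. -/
def PosDefForm (n : ℕ) (f : MvPolynomial (Fin n) ℝ) : Prop :=
  ∀ x : Fin n → ℝ, x ≠ 0 → 0 < eval x f

/-- For a sos form `f` of degree `2d`, the set `U_f` of forms `p` of degree `d`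
such that `f - c p ^ 2` is sos for some `c > 0`. -/
def Uset (n d : ℕ) (f : MvPolynomial (Fin n) ℝ) : Set (MvPolynomial (Fin n) ℝ) :=
  {p | p.IsHomogeneous d ∧ ∃ c : ℝ, 0 < c ∧ IsSOSForm n d (f - c • p ^ 2)}

/-!
Write `ρ = x₁² + ⋯ + xₙ²`. For a monomial `x^β` of degree `e`, the form `ρ^e - (x^β)²` is a sum of
squares: this holds for `ρ - x_j² = ∑_{i ≠ j} x_i²` and propagates to products through
`f f' - (p p')² = f (f' - p'²) + (f - p²) p'²`. Splitting a monomial of degree `2e` as `x^β x^γ`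
with `|β| = |γ| = e`, the identity
`t ρ^e + a x^β x^γ = (t - |a|) ρ^e + |a|/2 (ρ^e - (x^β)²) + |a|/2 (ρ^e - (x^γ)²) + |a|/2 (x^β ± x^γ)²`
shows that `t ρ^e + a x^α` is a sum of squares whenever `|a| ≤ t`. Hence every form of degree `2e`
whose coefficients are all within `c / (N + 1)` of those of `c ρ^e`, where `N` is the number of
monomials of degree `2e`, is a sum of `N` such terms and a nonnegative multiple of `ρ^e`; as the
coefficients are continuous, these forms make up a neighbourhood of `c ρ^e`.
-/

open Finset

namespace IsSOSForm

variable {n d d' : ℕ} {f f' p p' : MvPolynomial (Fin n) ℝ}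

lemma zero : IsSOSForm n d 0 :=
  ⟨0, fun _ => 0, fun i => i.elim0, by simp⟩

lemma sq (hp : p.IsHomogeneous d) : IsSOSForm n d (p ^ 2) :=
  ⟨1, fun _ => p, fun _ => hp, by simp⟩

lemma add (hf : IsSOSForm n d f) (hf' : IsSOSForm n d f') : IsSOSForm n d (f + f') := by
  obtain ⟨N, g, hg, rfl⟩ := hf
  obtain ⟨M, g', hg', rfl⟩ := hf'
  refine ⟨N + M, Fin.append g g', Fin.addCases (by simpa using hg) (by simpa using hg'), ?_⟩
  simp [Fin.sum_univ_add]

lemma sum {ι : Type*} (s : Finset ι) {F : ι → MvPolynomial (Fin n) ℝ}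
    (hF : ∀ i ∈ s, IsSOSForm n d (F i)) : IsSOSForm n d (∑ i ∈ s, F i) := by
  classical
  induction s using Finset.induction with
  | empty => simpa using zero
  | insert i s hi ih =>
    rw [sum_insert hi]
    exact (hF i (mem_insert_self i s)).add (ih fun j hj => hF j (mem_insert_of_mem hj))

lemma smul {t : ℝ} (ht : 0 ≤ t) (hf : IsSOSForm n d f) : IsSOSForm n d (t • f) := by
  obtain ⟨N, g, hg, rfl⟩ := hf
  refine ⟨N, fun i => C √t * g i, fun i => (hg i).C_mul √t, ?_⟩
  simp only [Finset.smul_sum, smul_eq_C_mul, mul_pow, ← C_pow, Real.sq_sqrt ht]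

lemma mul (hf : IsSOSForm n d f) (hf' : IsSOSForm n d' f') : IsSOSForm n (d + d') (f * f') := by
  obtain ⟨N, g, hg, rfl⟩ := hf
  obtain ⟨M, g', hg', rfl⟩ := hf'
  rw [sum_mul_sum]
  exact sum _ fun i _ => sum _ fun j _ => by rw [← mul_pow]; exact sq ((hg i).mul (hg' j))

lemma pow (hf : IsSOSForm n d f) (k : ℕ) : IsSOSForm n (d * k) (f ^ k) := by
  induction k with
  | zero => simpa using sq (isHomogeneous_one (Fin n) ℝ)
  | succ k ih => rw [pow_succ]; exact ih.mul hf

lemma mul_sub_sq (hf : IsSOSForm n d f) (hfp : IsSOSForm n d (f - p ^ 2))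
    (hp' : p'.IsHomogeneous d') (hfp' : IsSOSForm n d' (f' - p' ^ 2)) :
    IsSOSForm n (d + d') (f * f' - (p * p') ^ 2) := by
  have h : f * f' - (p * p') ^ 2 = f * (f' - p' ^ 2) + (f - p ^ 2) * p' ^ 2 := by ring
  rw [h]
  exact (hf.mul hfp').add (hfp.mul (sq hp'))

lemma pow_sub_sq (hf : IsSOSForm n d f) (hp : p.IsHomogeneous d) (hfp : IsSOSForm n d (f - p ^ 2))
    (k : ℕ) : IsSOSForm n (d * k) (f ^ k - (p ^ k) ^ 2) := by
  induction k with
  | zero => simpa using zero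
  | succ k ih => rw [pow_succ, pow_succ]; exact (hf.pow k).mul_sub_sq ih hp hfp

end IsSOSForm

lemma Finsupp.exists_add_eq_of_le_degree {σ : Type*} (α : σ →₀ ℕ) {k : ℕ} (hk : k ≤ α.degree) :
    ∃ β γ, β + γ = α ∧ β.degree = k := by
  induction α using Finsupp.induction_linear generalizing k with
  | zero => exact ⟨0, 0, add_zero 0, by simp_all⟩
  | add f g hf hg =>
    rw [map_add] at hk
    by_cases hkf : k ≤ f.degree
    · obtain ⟨β, γ, rfl, hβ⟩ := hf hkf
      exact ⟨β, γ + g, (add_assoc β γ g).symm, hβ⟩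
    · obtain ⟨β, γ, rfl, hβ⟩ := hg (k := k - f.degree) (by omega)
      exact ⟨f + β, γ, add_assoc f β γ, by rw [map_add, hβ]; omega⟩
  | single a b =>
    rw [degree_single] at hk
    exact ⟨single a k, single a (b - k), by rw [← single_add, Nat.add_sub_cancel' hk],
      degree_single a k⟩

section SumSq

variable {n : ℕ}

noncomputable def sumSq (n : ℕ) : MvPolynomial (Fin n) ℝ := ∑ i, X i ^ 2

lemma isSOSForm_sumSq : IsSOSForm n 1 (sumSq n) :=
  .sum _ fun i _ => .sq (isHomogeneous_X ℝ i)

lemma isSOSForm_sumSq_pow (e : ℕ) : IsSOSForm n e (sumSq n ^ e) := by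
  simpa using isSOSForm_sumSq.pow e

lemma isSOSForm_sumSq_sub_X_sq (j : Fin n) : IsSOSForm n 1 (sumSq n - X j ^ 2) := by
  rw [sumSq, ← sum_erase_eq_sub (mem_univ j)]
  exact .sum _ fun i _ => .sq (isHomogeneous_X ℝ i)

lemma isSOSForm_sumSq_pow_sub_monomial_sq (β : Fin n →₀ ℕ) :
    IsSOSForm n β.degree (sumSq n ^ β.degree - monomial β 1 ^ 2) := by
  induction β using Finsupp.induction_linear with
  | zero => simpa using IsSOSForm.zero
  | add β γ hβ hγ =>
    rw [map_add, pow_add, ← mul_one (1 : ℝ), ← monomial_mul]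
    exact (isSOSForm_sumSq_pow _).mul_sub_sq hβ (isHomogeneous_monomial _ rfl) hγ
  | single j k =>
    rw [degree_single, ← X_pow_eq_monomial]
    simpa using isSOSForm_sumSq.pow_sub_sq (isHomogeneous_X ℝ j) (isSOSForm_sumSq_sub_X_sq j) k

lemma isSOSForm_smul_sumSq_pow_add_monomial {e : ℕ} {α : Fin n →₀ ℕ} (hα : α.degree = 2 * e)
    {t a : ℝ} (ha : |a| ≤ t) : IsSOSForm n e (t • sumSq n ^ e + monomial α a) := by
  obtain ⟨β, γ, rfl, hβ⟩ := α.exists_add_eq_of_le_degree (k := e) (by omega)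
  have hγ : γ.degree = e := by rw [map_add] at hα; omega
  obtain ⟨s, hs, hsa⟩ : ∃ s : ℝ, s ^ 2 = 1 ∧ a = s * |a| := by
    rcases abs_choice a with h | h
    · exact ⟨1, one_pow 2, by rw [h, one_mul]⟩
    · exact ⟨-1, by norm_num, by rw [h]; ring⟩
  set b := |a| / 2
  have key : t • sumSq n ^ e + monomial (β + γ) a =
      (t - |a|) • sumSq n ^ e + b • (sumSq n ^ e - monomial β 1 ^ 2)
        + b • (sumSq n ^ e - monomial γ 1 ^ 2) + b • (monomial β 1 + monomial γ s) ^ 2 := by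
    have hmul : monomial (β + γ) a = C a * (monomial β 1 * monomial γ 1) := by
      rw [monomial_mul, C_mul_monomial, mul_one, mul_one]
    have hsγ : monomial γ s = C s * monomial γ (1 : ℝ) := by rw [C_mul_monomial, mul_one]
    have ht : C t = C (t - |a|) + 2 * (C b : MvPolynomial (Fin n) ℝ) := by
      rw [← map_ofNat C 2, ← C_mul, ← C_add]; congr 1; ring
    have hCa : C a = C s * (2 * C b : MvPolynomial (Fin n) ℝ) := by
      rw [← map_ofNat C 2, ← C_mul, ← C_mul]; congr 1; rw [hsa]; ring
    have hCs : (C s : MvPolynomial (Fin n) ℝ) ^ 2 = 1 := by rw [← C_pow, hs, C_1]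
    simp only [smul_eq_C_mul, hmul, hsγ]
    linear_combination sumSq n ^ e * ht + monomial β 1 * monomial γ 1 * hCa
      - C b * monomial γ 1 ^ 2 * hCs
  rw [key]
  have hb0 : 0 ≤ b := by positivity
  refine .add (.add (.add (.smul (by linarith) (isSOSForm_sumSq_pow e)) ?_) ?_) ?_
  · exact .smul hb0 (hβ ▸ isSOSForm_sumSq_pow_sub_monomial_sq β)
  · exact .smul hb0 (hγ ▸ isSOSForm_sumSq_pow_sub_monomial_sq γ)
  · exact .smul hb0 (.sq ((isHomogeneous_monomial _ hβ).add (isHomogeneous_monomial _ hγ)))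

lemma isSOSForm_smul_sumSq_pow_add {e : ℕ} {q : MvPolynomial (Fin n) ℝ}
    (hq : q.IsHomogeneous (2 * e)) {t c : ℝ} (hqt : ∀ α ∈ q.support, |coeff α q| ≤ t)
    (htc : #q.support * t ≤ c) : IsSOSForm n e (c • sumSq n ^ e + q) := by
  have hsplit : c • sumSq n ^ e + q = (c - #q.support * t) • sumSq n ^ e
      + ∑ α ∈ q.support, (t • sumSq n ^ e + monomial α (coeff α q)) := by
    rw [sum_add_distrib, sum_const, ← q.as_sum]
    module
  rw [hsplit]
  refine .add (.smul (by linarith) (isSOSForm_sumSq_pow e)) (.sum _ fun α hα => ?_)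
  exact isSOSForm_smul_sumSq_pow_add_monomial (hq.degree_eq_sum_deg_support hα).symm (hqt α hα)

instance (n d : ℕ) : IsModuleTopology ℝ (homogeneousSubmodule (Fin n) ℝ d) := ⟨rfl⟩

lemma continuous_coeff_homogeneousSubmodule (d : ℕ) (α : Fin n →₀ ℕ) :
    Continuous fun g : homogeneousSubmodule (Fin n) ℝ d => coeff α (g : MvPolynomial (Fin n) ℝ) :=
  IsModuleTopology.continuous_of_linearMap ((lcoeff ℝ α).comp (Submodule.subtype _))

end SumSq

theorem smul_power_sum_sq_mem_interior_general (n e : ℕ) (c : ℝ) (hc : 0 < c)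
    (hmem : C c * (∑ i : Fin n, X i ^ 2) ^ e ∈ homogeneousSubmodule (Fin n) ℝ (2 * e)) :
    (⟨C c * (∑ i : Fin n, X i ^ 2) ^ e, hmem⟩ : homogeneousSubmodule (Fin n) ℝ (2 * e))
      ∈ interior (SigmaCone n e) := by
  set f : homogeneousSubmodule (Fin n) ℝ (2 * e) := ⟨_, hmem⟩
  set D := finsuppAntidiag (univ : Finset (Fin n)) (2 * e)
  have hε : 0 < c / (#D + 1) := by positivity
  rw [mem_interior_iff_mem_nhds]
  filter_upwards [(Filter.eventually_all_finset D).2 fun α _ =>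
    ((continuous_coeff_homogeneousSubmodule _ α).tendsto f).eventually
      (eventually_abs_sub_lt _ hε)] with g hg
  set q := (g : MvPolynomial (Fin n) ℝ) - f
  have hq : q.IsHomogeneous (2 * e) := g.2.sub hmem
  have hqD : q.support ⊆ D := fun α hα => mem_finsuppAntidiag.2
    ⟨(degree_eq_sum α).symm.trans (hq.degree_eq_sum_deg_support hα).symm, subset_univ _⟩
  have hcard : #q.support * (c / (#D + 1)) ≤ c := calc
    #q.support * (c / (#D + 1)) ≤ (#D + 1) * (c / (#D + 1)) := by
      gcongr; exact_mod_cast (card_le_card hqD).trans (Nat.le_succ _)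
    _ = c := mul_div_cancel₀ _ (by positivity)
  have hsos := isSOSForm_smul_sumSq_pow_add hq (fun α hα => by
    simpa [q] using (hg α (hqD hα)).le) hcard
  show IsSOSForm n e g
  convert hsos using 1
  simp [q, f, sumSq, smul_eq_C_mul]

theorem smul_power_sum_sq_mem_interior (n e : ℕ) (he : 1 ≤ e) (c : ℝ) (hc : 0 < c)
    (hmem : C c * (∑ i : Fin n, X i ^ 2) ^ e ∈ homogeneousSubmodule (Fin n) ℝ (2 * e)) :
    (⟨C c * (∑ i : Fin n, X i ^ 2) ^ e, hmem⟩ : homogeneousSubmodule (Fin n) ℝ (2 * e))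
      ∈ interior (SigmaCone n e) :=
  smul_power_sum_sq_mem_interior_general n e c hc hmem
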